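/- arXiv:0904.0608 — 2 statements merged into one kernel-verified Lean document; each statement's English description precedes it below -/
import Mathlib

section
/- Let (P_0, ..., P_m) be a Clifford system on ℝ^{2l} and define F(x) = ⟨x,x⟩² − 2·Σ_{i=0}^{m} ⟨P_i x, x⟩². Then the squared norm of the Euclidean gradient of F satisfies |grad F(x)|² = 16⟨x,x⟩³ for all x ∈ ℝ^{2l}. -/
/-!
Writing `a = ⟪x, x⟫` and `cᵢ = ⟪Pᵢ x, x⟫`, the gradient of `F` is `4a x - 8 ∑ cᵢ Pᵢ x`.
Symmetry and the Clifford relations make the vectors `Pᵢ x` pairwise orthogonal of squared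
length `a`, so `⟪x, ∑ cᵢ Pᵢ x⟫ = ∑ cᵢ²` and `‖∑ cᵢ Pᵢ x‖² = a ∑ cᵢ²`; in the expansion of
`‖grad F(x)‖²` the cross term `-64 a ∑ cᵢ²` then cancels the last term `64 a ∑ cᵢ²`,
leaving `16 a³`.
-/

open scoped RealInnerProductSpace

section Gradient

variable {E : Type*} [NormedAddCommGroup E] [InnerProductSpace ℝ E] [CompleteSpace E]
  {f g : E → ℝ} {f' g' x : E}

theorem HasGradientAt.sub (hf : HasGradientAt f f' x) (hg : HasGradientAt g g' x) :
    HasGradientAt (fun y => f y - g y) (f' - g') x := by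
  rw [hasGradientAt_iff_hasFDerivAt, map_sub]
  exact hf.hasFDerivAt.sub hg.hasFDerivAt

theorem HasGradientAt.const_mul (c : ℝ) (hf : HasGradientAt f f' x) :
    HasGradientAt (fun y => c * f y) (c • f') x := by
  rw [hasGradientAt_iff_hasFDerivAt, map_smul]
  exact hf.hasFDerivAt.const_mul c

theorem HasGradientAt.sum {ι : Type*} {s : Finset ι} {f : ι → E → ℝ} {f' : ι → E}
    (hf : ∀ i ∈ s, HasGradientAt (f i) (f' i) x) :
    HasGradientAt (fun y => ∑ i ∈ s, f i y) (∑ i ∈ s, f' i) x := by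
  rw [hasGradientAt_iff_hasFDerivAt, map_sum]
  exact HasFDerivAt.fun_sum fun i hi => (hf i hi).hasFDerivAt

theorem HasGradientAt.sq (hf : HasGradientAt f f' x) :
    HasGradientAt (fun y => f y ^ 2) ((2 * f x) • f') x := by
  rw [hasGradientAt_iff_hasFDerivAt, map_smul]
  simpa [Function.comp_def] using (hasDerivAt_pow 2 (f x)).comp_hasFDerivAt x hf.hasFDerivAt

theorem LinearMap.IsSymmetric.hasGradientAt_inner_self {T : E →L[ℝ] E}
    (hT : (T : E →ₗ[ℝ] E).IsSymmetric) (x : E) :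
    HasGradientAt (fun y => ⟪T y, y⟫) ((2 : ℝ) • T x) x := by
  have hq : (fun y => ⟪T y, y⟫) = T.reApplyInnerSelf := rfl
  rw [hq, hasGradientAt_iff_hasFDerivAt, map_smul, two_smul, ← two_nsmul]
  exact (hT.hasStrictFDerivAt_reApplyInnerSelf x).hasFDerivAt

end Gradient

section Clifford

variable {E ι : Type*} [NormedAddCommGroup E] [InnerProductSpace ℝ E] {P : ι → E →ₗ[ℝ] E}

theorem LinearMap.IsSymmetric.hasGradientAt_inner_self_sq [FiniteDimensional ℝ E]
    {T : E →ₗ[ℝ] E} (hT : T.IsSymmetric) (x : E) :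
    HasGradientAt (fun y => ⟪T y, y⟫ ^ 2) ((4 * ⟪T x, x⟫) • T x) x := by
  convert (LinearMap.IsSymmetric.hasGradientAt_inner_self (T := T.toContinuousLinearMap) hT x).sq
    using 1
  · rfl
  change _ = (2 * ⟪T x, x⟫) • (2 : ℝ) • T x
  rw [smul_smul]
  ring_nf

theorem inner_apply_apply_eq_ite_of_clifford [DecidableEq ι] (hsym : ∀ i, (P i).IsSymmetric)
    (hcliff : ∀ i j x, P i (P j x) + P j (P i x) = if i = j then (2 : ℝ) • x else 0)
    (i j : ι) (x : E) : ⟪P i x, P j x⟫ = if i = j then ⟪x, x⟫ else 0 := by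
  have h : 2 * ⟪P i x, P j x⟫ = ⟪x, P i (P j x) + P j (P i x)⟫ := by
    rw [inner_add_right, ← hsym i x, ← hsym j x, real_inner_comm (P j x)]
    ring
  rw [hcliff] at h
  split_ifs at h ⊢ <;> simp only [real_inner_smul_right, inner_zero_right] at h <;> linarith

variable [Fintype ι]

def fkm (P : ι → E →ₗ[ℝ] E) (y : E) : ℝ := ⟪y, y⟫ ^ 2 - 2 * ∑ i, ⟪P i y, y⟫ ^ 2

def fkmGradient (P : ι → E →ₗ[ℝ] E) (x : E) : E :=
  (4 * ⟪x, x⟫) • x - (8 : ℝ) • ∑ i, ⟪P i x, x⟫ • P i x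

theorem hasGradientAt_fkm [FiniteDimensional ℝ E]
    (hsym : ∀ i, (P i).IsSymmetric) (x : E) : HasGradientAt (fkm P) (fkmGradient P x) x := by
  convert LinearMap.IsSymmetric.id.hasGradientAt_inner_self_sq x |>.sub
    ((HasGradientAt.sum (s := Finset.univ) fun i _ =>
      (hsym i).hasGradientAt_inner_self_sq x).const_mul 2) using 1
  · rfl
  rw [fkmGradient, LinearMap.id_apply, Finset.smul_sum, Finset.smul_sum]
  simp only [smul_smul]
  ring_nf

theorem norm_fkmGradient_sq [DecidableEq ι] (hsym : ∀ i, (P i).IsSymmetric)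
    (hcliff : ∀ i j x, P i (P j x) + P j (P i x) = if i = j then (2 : ℝ) • x else 0) (x : E) :
    ‖fkmGradient P x‖ ^ 2 = 16 * ⟪x, x⟫ ^ 3 := by
  rw [fkmGradient]
  set c : ι → ℝ := fun i => ⟪P i x, x⟫
  set B := ∑ i, c i • P i x
  have hxB : ⟪x, B⟫ = ∑ i, c i ^ 2 := by
    simp only [B, inner_sum, real_inner_smul_right, real_inner_comm x, sq, c]
  have hBB : ⟪B, B⟫ = ⟪x, x⟫ * ∑ i, c i ^ 2 := by
    simp only [B, sum_inner, inner_sum, real_inner_smul_left, real_inner_smul_right,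
      inner_apply_apply_eq_ite_of_clifford hsym hcliff, mul_ite, mul_zero,
      Finset.sum_ite_eq', Finset.mem_univ, if_true, Finset.mul_sum]
    exact Finset.sum_congr rfl fun i _ => by ring
  rw [← real_inner_self_eq_norm_sq, real_inner_sub_sub_self]
  simp only [real_inner_smul_left, real_inner_smul_right, hxB, hBB]
  ring

theorem norm_gradient_fkm_sq [DecidableEq ι] [FiniteDimensional ℝ E]
    (hsym : ∀ i, (P i).IsSymmetric)
    (hcliff : ∀ i j x, P i (P j x) + P j (P i x) = if i = j then (2 : ℝ) • x else 0) (x : E) :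
    ‖gradient (fkm P) x‖ ^ 2 = 16 * ⟪x, x⟫ ^ 3 := by
  rw [(hasGradientAt_fkm hsym x).gradient, norm_fkmGradient_sq hsym hcliff]

end Clifford

/-- For a Clifford system `(P 0, ..., P m)` on `ℝ^{2l}`, the FKM polynomial
`F x = ⟨x,x⟩² - 2 ∑ᵢ ⟨Pᵢ x, x⟩²` satisfies `|grad F(x)|² = 16 ⟨x,x⟩³`. -/
theorem fkm_gradient_eq (l m : ℕ)
    (P : Fin (m + 1) → EuclideanSpace ℝ (Fin (2 * l)) →ₗ[ℝ] EuclideanSpace ℝ (Fin (2 * l)))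
    (hsym : ∀ i (x y : EuclideanSpace ℝ (Fin (2 * l))),
      (inner ℝ (P i x) y : ℝ) = inner ℝ x (P i y))
    (hcliff : ∀ i j (x : EuclideanSpace ℝ (Fin (2 * l))), P i (P j x) + P j (P i x) =
      if i = j then (2 : ℝ) • x else 0)
    (x : EuclideanSpace ℝ (Fin (2 * l))) :
    ‖gradient (fun y : EuclideanSpace ℝ (Fin (2 * l)) =>
        (inner ℝ y y : ℝ) ^ 2 - 2 * ∑ i, (inner ℝ (P i y) y : ℝ) ^ 2) x‖ ^ 2 =
      16 * (inner ℝ x x : ℝ) ^ 3 :=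
  norm_gradient_fkm_sq hsym hcliff x
end

section
/- Let Υ be the totally symmetric trace-free 3-tensor on ℝ⁵ determined by the cubic x_5³ + (3/2)x_5(x_1² + x_2²) − 3x_5(x_3² + x_4²) + (3√3/2)x_4(x_1² − x_2²) + 3√3·x_1 x_2 x_3. Then Υ satisfies the Nurowski identity: for all indices j, k, l, m ∈ {1,...,5}, Σ_i (Υ_{ijk}Υ_{lmi} + Υ_{lji}Υ_{kmi} + Υ_{kli}Υ_{jmi}) = δ_{jk}δ_{lm} + δ_{lj}δ_{km} + δ_{kl}δ_{jm}. -/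
/-!
A symmetric 3-tensor is determined by its cubic form (polarization), so `Υ` must be
`Υᵢⱼₖ = (1/6) ∂³P/∂xᵢ∂xⱼ∂xₖ`, i.e. `1/12` times the symmetrization of the tensor that carries
the coefficients of `2P`. That coefficient tensor has entries in `ℤ[√3]`, where the identity can be
checked by exact computation; it is then transported to `ℝ` along the ring map `√3 ↦ Real.sqrt 3`.
-/

open Finset

section Tensor3

variable {ι R : Type*} [CommRing R]

def IsSymmetricTensor (T : ι → ι → ι → R) : Prop :=
  (∀ i j k, T i j k = T j i k) ∧ ∀ i j k, T i j k = T i k j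

theorem IsSymmetricTensor.smul {T : ι → ι → ι → R} (hT : IsSymmetricTensor T) (c : R) :
    IsSymmetricTensor (c • T) :=
  ⟨fun i j k => by simp only [Pi.smul_apply, hT.1 i j k],
    fun i j k => by simp only [Pi.smul_apply, hT.2 i j k]⟩

def symmetrize (T : ι → ι → ι → R) : ι → ι → ι → R :=
  fun i j k => T i j k + T i k j + T j i k + T j k i + T k i j + T k j i

theorem isSymmetricTensor_symmetrize (T : ι → ι → ι → R) :
    IsSymmetricTensor (symmetrize T) :=
  ⟨fun _ _ _ => by simp only [symmetrize]; ring, fun _ _ _ => by simp only [symmetrize]; ring⟩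

theorem map_symmetrize {S : Type*} [CommRing S] (f : R →+* S) (T : ι → ι → ι → R) :
    (fun i j k => f (symmetrize T i j k)) = symmetrize (fun i j k => f (T i j k)) := by
  funext i j k
  simp only [symmetrize, map_add]

def tensorSingle [DecidableEq ι] (a b c : ι) : ι → ι → ι → R :=
  Pi.single a (Pi.single b (Pi.single c 1))

def cyclicDelta [DecidableEq ι] (j k l m : ι) : R :=
  (if j = k then 1 else 0) * (if l = m then 1 else 0)
    + (if l = j then 1 else 0) * (if k = m then 1 else 0)
    + (if k = l then 1 else 0) * (if j = m then 1 else 0)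

theorem map_cyclicDelta {S : Type*} [CommRing S] [DecidableEq ι] (f : R →+* S) (j k l m : ι) :
    f (cyclicDelta j k l m) = cyclicDelta j k l m := by
  simp only [cyclicDelta, map_add, map_mul, apply_ite f, map_one, map_zero]

variable [Fintype ι]

def trilinForm (x y z : ι → R) : (ι → ι → ι → R) →ₗ[R] R where
  toFun T := ∑ i, ∑ j, ∑ k, T i j k * x i * y j * z k
  map_add' T S := by simp only [Pi.add_apply, add_mul, sum_add_distrib]
  map_smul' c T := by simp only [Pi.smul_apply, smul_eq_mul, mul_sum, mul_assoc, RingHom.id_apply]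

theorem trilinForm_apply (x y z : ι → R) (T : ι → ι → ι → R) :
    trilinForm x y z T = ∑ i, ∑ j, ∑ k, T i j k * x i * y j * z k :=
  rfl

theorem trilinForm_add_left (x x' y z : ι → R) (T : ι → ι → ι → R) :
    trilinForm (x + x') y z T = trilinForm x y z T + trilinForm x' y z T := by
  simp only [trilinForm_apply, Pi.add_apply, mul_add, add_mul, sum_add_distrib]

theorem trilinForm_add_middle (x y y' z : ι → R) (T : ι → ι → ι → R) :
    trilinForm x (y + y') z T = trilinForm x y z T + trilinForm x y' z T := by
  simp only [trilinForm_apply, Pi.add_apply, mul_add, add_mul, sum_add_distrib]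

theorem trilinForm_add_right (x y z z' : ι → R) (T : ι → ι → ι → R) :
    trilinForm x y (z + z') T = trilinForm x y z T + trilinForm x y z' T := by
  simp only [trilinForm_apply, Pi.add_apply, mul_add, sum_add_distrib]

theorem trilinForm_swap (x y z : ι → R) (T : ι → ι → ι → R) :
    trilinForm x y z (Function.swap T) = trilinForm y x z T := by
  rw [trilinForm_apply, trilinForm_apply, sum_comm]
  exact sum_congr rfl fun _ _ => sum_congr rfl fun _ _ => sum_congr rfl fun _ _ => by
    simp only [Function.swap]; ring

theorem trilinForm_swap_right (x y z : ι → R) (T : ι → ι → ι → R) :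
    trilinForm x y z (fun i => Function.swap (T i)) = trilinForm x z y T := by
  rw [trilinForm_apply, trilinForm_apply]
  refine sum_congr rfl fun _ _ => ?_
  rw [sum_comm]
  exact sum_congr rfl fun _ _ => sum_congr rfl fun _ _ => by simp only [Function.swap]; ring

theorem trilinForm_symmetrize_diag (x : ι → R) (T : ι → ι → ι → R) :
    trilinForm x x x (symmetrize T) = 6 * trilinForm x x x T := by
  have hdecomp : symmetrize T = T + (fun i => Function.swap (T i)) + Function.swap T
      + Function.swap (fun i => Function.swap (T i))
      + (fun i => Function.swap (Function.swap T i))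
      + Function.swap (fun i => Function.swap (Function.swap T i)) := rfl
  rw [hdecomp]
  simp only [map_add]
  rw [trilinForm_swap, trilinForm_swap_right, trilinForm_swap, trilinForm_swap_right,
    trilinForm_swap_right, trilinForm_swap, trilinForm_swap, trilinForm_swap_right, trilinForm_swap]
  ring

theorem trilinForm_tensorSingle [DecidableEq ι] (x y z : ι → R) (a b c : ι) :
    trilinForm x y z (tensorSingle a b c) = x a * y b * z c := by
  simp [trilinForm_apply, tensorSingle, Pi.single_apply, ite_apply]

theorem trilinForm_single [DecidableEq ι] (T : ι → ι → ι → R) (p q r : ι) :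
    trilinForm (Pi.single p 1) (Pi.single q 1) (Pi.single r 1) T = T p q r := by
  simp [trilinForm_apply, Pi.single_apply]

theorem IsSymmetricTensor.trilinForm_comm_left {T : ι → ι → ι → R} (hT : IsSymmetricTensor T)
    (x y z : ι → R) : trilinForm x y z T = trilinForm y x z T := by
  rw [← trilinForm_swap]
  congr
  funext i j k
  exact hT.1 i j k

theorem IsSymmetricTensor.trilinForm_comm_right {T : ι → ι → ι → R} (hT : IsSymmetricTensor T)
    (x y z : ι → R) : trilinForm x y z T = trilinForm x z y T := by
  rw [← trilinForm_swap_right]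
  congr
  funext i j k
  exact (hT.2 i j k).symm

theorem IsSymmetricTensor.polarization {T : ι → ι → ι → R} (hT : IsSymmetricTensor T)
    (x y z : ι → R) :
    6 * trilinForm x y z T =
      trilinForm (x + y + z) (x + y + z) (x + y + z) T - trilinForm (x + y) (x + y) (x + y) T
        - trilinForm (x + z) (x + z) (x + z) T - trilinForm (y + z) (y + z) (y + z) T
        + trilinForm x x x T + trilinForm y y y T + trilinForm z z z T := by
  simp only [trilinForm_add_left, trilinForm_add_middle, trilinForm_add_right]
  linear_combination 2 * hT.trilinForm_comm_left x y z + 3 * hT.trilinForm_comm_right x y z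
    + hT.trilinForm_comm_right y x z + 2 * hT.trilinForm_comm_left x z y
    + hT.trilinForm_comm_right z x y

theorem IsSymmetricTensor.eq_of_trilinForm_diag_eq [IsAddTorsionFree R] {T S : ι → ι → ι → R}
    (hT : IsSymmetricTensor T) (hS : IsSymmetricTensor S)
    (h : ∀ x, trilinForm x x x T = trilinForm x x x S) : T = S := by
  classical
  funext p q r
  have h6 : 6 * T p q r = 6 * S p q r := by
    rw [← trilinForm_single T, ← trilinForm_single S, hT.polarization, hS.polarization]
    simp only [h]
  apply nsmul_right_injective (by norm_num : (6 : ℕ) ≠ 0)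
  simpa only [nsmul_eq_mul, Nat.cast_ofNat] using h6

def cyclicContraction (T : ι → ι → ι → R) (j k l m : ι) : R :=
  ∑ i, (T i j k * T l m i + T l j i * T k m i + T k l i * T j m i)

theorem cyclicContraction_smul (c : R) (T : ι → ι → ι → R) (j k l m : ι) :
    cyclicContraction (c • T) j k l m = c ^ 2 * cyclicContraction T j k l m := by
  simp only [cyclicContraction, mul_sum, Pi.smul_apply, smul_eq_mul]
  exact sum_congr rfl fun _ _ => by ring

theorem cyclicContraction_map {S : Type*} [CommRing S] (f : R →+* S) (T : ι → ι → ι → R)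
    (j k l m : ι) :
    cyclicContraction (fun i j k => f (T i j k)) j k l m = f (cyclicContraction T j k l m) := by
  simp only [cyclicContraction, map_sum, map_add, map_mul]

end Tensor3

section Nurowski

variable {R : Type*} [CommRing R]

/-- Each monomial of `2P` (with `√3` replaced by `s`) placed at one ordering of its indices. -/
def nurowskiCoeff (s : R) : Fin 5 → Fin 5 → Fin 5 → R :=
  (2 : R) • tensorSingle 4 4 4 + (3 : R) • (tensorSingle 4 0 0 + tensorSingle 4 1 1)
    - (6 : R) • (tensorSingle 4 2 2 + tensorSingle 4 3 3)
    + (3 * s) • (tensorSingle 3 0 0 - tensorSingle 3 1 1) + (6 * s) • tensorSingle 0 1 2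

theorem trilinForm_nurowskiCoeff (s : R) (x : Fin 5 → R) :
    trilinForm x x x (nurowskiCoeff s) =
      2 * x 4 ^ 3 + 3 * x 4 * (x 0 ^ 2 + x 1 ^ 2) - 6 * x 4 * (x 2 ^ 2 + x 3 ^ 2)
        + 3 * s * x 3 * (x 0 ^ 2 - x 1 ^ 2) + 6 * s * x 0 * x 1 * x 2 := by
  simp only [nurowskiCoeff, map_add, map_sub, map_smul, trilinForm_tensorSingle, smul_eq_mul]
  ring

theorem map_nurowskiCoeff {S : Type*} [CommRing S] (f : R →+* S) (s : R) :
    (fun i j k => f (nurowskiCoeff s i j k)) = nurowskiCoeff (f s) := by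
  funext i j k
  simp [nurowskiCoeff, tensorSingle, Pi.single_apply, ite_apply, apply_ite f, map_ofNat]

end Nurowski

theorem cyclicContraction_symmetrize_nurowskiCoeff_sqrtd (j k l m : Fin 5) :
    cyclicContraction (symmetrize (nurowskiCoeff (Zsqrtd.sqrtd : ℤ√3))) j k l m =
      144 * cyclicDelta j k l m := by
  revert j k l m
  decide +kernel

noncomputable def nurowskiTensor : Fin 5 → Fin 5 → Fin 5 → ℝ :=
  (12 : ℝ)⁻¹ • symmetrize (nurowskiCoeff √3)

theorem trilinForm_nurowskiTensor (x : Fin 5 → ℝ) :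
    trilinForm x x x nurowskiTensor =
      (x 4) ^ 3 + (3 / 2) * x 4 * ((x 0) ^ 2 + (x 1) ^ 2)
          - 3 * x 4 * ((x 2) ^ 2 + (x 3) ^ 2)
          + (3 * Real.sqrt 3 / 2) * x 3 * ((x 0) ^ 2 - (x 1) ^ 2)
          + 3 * Real.sqrt 3 * x 0 * x 1 * x 2 := by
  rw [nurowskiTensor, map_smul, trilinForm_symmetrize_diag, trilinForm_nurowskiCoeff, smul_eq_mul]
  ring

theorem cyclicContraction_nurowskiTensor (j k l m : Fin 5) :
    cyclicContraction nurowskiTensor j k l m = cyclicDelta j k l m := by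
  let φ : ℤ√3 →+* ℝ := Zsqrtd.lift ⟨√3, by norm_num⟩
  have hφ : φ Zsqrtd.sqrtd = √3 := by simp [φ]
  have h := congrArg φ (cyclicContraction_symmetrize_nurowskiCoeff_sqrtd j k l m)
  rw [← cyclicContraction_map, map_symmetrize, map_nurowskiCoeff, hφ, map_mul, map_cyclicDelta,
    map_ofNat] at h
  rw [nurowskiTensor, cyclicContraction_smul, h]
  ring

/-- The totally symmetric 3-tensor `Υ` on `ℝ⁵` determined by Nurowski's cubic
`x₅³ + (3/2)x₅(x₁²+x₂²) - 3x₅(x₃²+x₄²) + (3√3/2)x₄(x₁²-x₂²) + 3√3 x₁x₂x₃`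
satisfies the Nurowski identity
`∑ᵢ (Υᵢⱼₖ Υₗₘᵢ + Υₗⱼᵢ Υₖₘᵢ + Υₖₗᵢ Υⱼₘᵢ) = δⱼₖδₗₘ + δₗⱼδₖₘ + δₖₗδⱼₘ`. -/
theorem nurowski_tensor_identity (Υ : Fin 5 → Fin 5 → Fin 5 → ℝ)
    (hsym1 : ∀ i j k, Υ i j k = Υ j i k)
    (hsym2 : ∀ i j k, Υ i j k = Υ i k j)
    (hcubic : ∀ x : Fin 5 → ℝ,
      ∑ i, ∑ j, ∑ k, Υ i j k * x i * x j * x k =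
        (x 4) ^ 3 + (3 / 2) * x 4 * ((x 0) ^ 2 + (x 1) ^ 2)
          - 3 * x 4 * ((x 2) ^ 2 + (x 3) ^ 2)
          + (3 * Real.sqrt 3 / 2) * x 3 * ((x 0) ^ 2 - (x 1) ^ 2)
          + 3 * Real.sqrt 3 * x 0 * x 1 * x 2)
    (j k l m : Fin 5) :
    ∑ i, (Υ i j k * Υ l m i + Υ l j i * Υ k m i + Υ k l i * Υ j m i) =
      (if j = k then (1 : ℝ) else 0) * (if l = m then 1 else 0)
        + (if l = j then (1 : ℝ) else 0) * (if k = m then 1 else 0)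
        + (if k = l then (1 : ℝ) else 0) * (if j = m then 1 else 0) := by
  have hΥ : Υ = nurowskiTensor :=
    IsSymmetricTensor.eq_of_trilinForm_diag_eq ⟨hsym1, hsym2⟩
      ((isSymmetricTensor_symmetrize _).smul _)
      fun x => (hcubic x).trans (trilinForm_nurowskiTensor x).symm
  rw [hΥ]
  exact cyclicContraction_nurowskiTensor j k l m
end
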